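/- arXiv:2505.01557 — 5 statements merged into one kernel-verified Lean document; each statement's English description precedes it below -/
import Mathlib

section
/- Closed form of compatibility: Let $f \in L^2(P_\mathcal{X})$ have expansion $\tilde f = \sum_{i \ge 1} u_i \mu_i$ in the left singular functions of $T_{P^+}$ (where $\tilde f = f - \mathbb{E}[f]$). Then the compatibility $\rho(f, P^+) = \max_{g \ne 0} \frac{\langle \tilde f, T_{P^+} g \rangle_{P_\mathcal{X}}}{\|\tilde f\|_{P_\mathcal{X}} \|g\|_{P_\mathcal{A}}}$ equals $\sqrt{\frac{\sum_{i \ge 1} s_i^2 u_i^2}{\sum_{i \ge 1} u_i^2}}$. -/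
open scoped InnerProductSpace
open ContinuousLinearMap

/-!
The functional `g ↦ ⟪f, T g⟫` is represented by `T⋆ f`, and the singular value decomposition
gives `T⋆ f = ∑ s_{i+1} u_i ν_{i+1}`. By Cauchy–Schwarz the quotient is at most `‖T⋆ f‖ / ‖f‖`,
with equality at `g = T⋆ f`, and orthonormality gives `‖T⋆ f‖² = ∑ s_{i+1}² u_i²`, `‖f‖² = ∑ u_i²`.
-/

section Orthonormal

variable {ι E : Type*} [NormedAddCommGroup E] [InnerProductSpace ℝ E]
  {v : ι → E} {c : ι → ℝ} {x : E}

theorem Orthonormal.inner_left_eq_of_hasSum (hv : Orthonormal ℝ v)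
    (hx : HasSum (fun i => c i • v i) x) (j : ι) : ⟪v j, x⟫_ℝ = c j := by
  classical
  have h := hx.mapL (innerSL ℝ (v j))
  simp only [innerSL_apply_apply, inner_smul_right, orthonormal_iff_ite.1 hv, mul_ite, mul_one,
    mul_zero] at h
  simpa using h.unique (hasSum_single j fun i hi => if_neg hi.symm)

theorem Orthonormal.hasSum_sq_of_hasSum (hv : Orthonormal ℝ v)
    (hx : HasSum (fun i => c i • v i) x) : HasSum (fun i => c i ^ 2) (‖x‖ ^ 2) := by
  have h := hx.mapL (innerSL ℝ x)
  simp only [innerSL_apply_apply, real_inner_comm _ x, real_inner_smul_left,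
    hv.inner_left_eq_of_hasSum hx, real_inner_self_eq_norm_sq] at h
  simpa only [sq] using h

end Orthonormal

theorem isGreatest_inner_div_mul_norm {E : Type*} [NormedAddCommGroup E] [InnerProductSpace ℝ E]
    [Nontrivial E] (x : E) {c : ℝ} (hc : 0 ≤ c) :
    IsGreatest { r : ℝ | ∃ g : E, g ≠ 0 ∧ r = ⟪x, g⟫_ℝ / (c * ‖g‖) } (‖x‖ / c) := by
  constructor
  · rcases eq_or_ne x 0 with rfl | hx
    · obtain ⟨g, hg⟩ := exists_ne (0 : E)
      exact ⟨g, hg, by simp⟩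
    · refine ⟨x, hx, ?_⟩
      have : 0 < ‖x‖ := norm_pos_iff.2 hx
      rw [real_inner_self_eq_norm_sq]
      field_simp
  · rintro r ⟨g, hg, rfl⟩
    have hg : 0 < ‖g‖ := norm_pos_iff.2 hg
    rw [mul_comm, ← div_div]
    refine div_le_div_of_nonneg_right ?_ hc
    rw [div_le_iff₀ hg]
    exact real_inner_le_norm x g

theorem stmt3_general {HA HX : Type*}
    [NormedAddCommGroup HA] [InnerProductSpace ℝ HA] [CompleteSpace HA]
    [NormedAddCommGroup HX] [InnerProductSpace ℝ HX] [CompleteSpace HX]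
    (T : HA →L[ℝ] HX)
    (s : ℕ → ℝ)
    (μ : ℕ → HX) (ν : ℕ → HA) (hμ : Orthonormal ℝ μ) (hν : Orthonormal ℝ ν)
    (hadj : ∀ (g : HA) (i : ℕ), ⟪μ i, T g⟫_ℝ = s i * ⟪ν i, g⟫_ℝ)
    (u : ℕ → ℝ)
    (f : HX) (hf : HasSum (fun i => u i • μ (i + 1)) f) :
    IsGreatest { r : ℝ | ∃ g : HA, g ≠ 0 ∧ r = ⟪f, T g⟫_ℝ / (‖f‖ * ‖g‖) }
      (Real.sqrt ((∑' i, (s (i + 1)) ^ 2 * (u i) ^ 2) / ∑' i, (u i) ^ 2)) := by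
  have hadjμ : ∀ i, adjoint T (μ i) = s i • ν i := fun i =>
    ext_inner_right ℝ fun g => by
      rw [adjoint_inner_left, hadj, real_inner_smul_left]
  have hadjf : HasSum (fun i => (s (i + 1) * u i) • ν (i + 1)) (adjoint T f) := by
    simpa only [map_smul, hadjμ, smul_smul, mul_comm (u _)] using hf.mapL (adjoint T)
  have shift := add_left_injective (G := ℕ) 1
  have hnum := ((hν.comp _ shift).hasSum_sq_of_hasSum hadjf).tsum_eq
  have hden := ((hμ.comp _ shift).hasSum_sq_of_hasSum hf).tsum_eq
  simp only [mul_pow] at hnum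
  have : Nontrivial HA := nontrivial_of_ne _ _ (hν.ne_zero 0)
  rw [hnum, hden, Real.sqrt_div' _ (sq_nonneg _), Real.sqrt_sq (norm_nonneg _),
    Real.sqrt_sq (norm_nonneg _)]
  simp_rw [← adjoint_inner_left]
  exact isGreatest_inner_div_mul_norm _ (norm_nonneg f)

/-- Closed form of compatibility. Let `T` have singular value
decomposition `T ν_i = s_i μ_i` with `(ν_i)` an orthonormal basis of `L²(P_A)`
and `(μ_i)` orthonormal in `L²(P_X)`. If the centered `f̃ = ∑_{i≥1} u_i μ_i`
(here `f` already denotes `f̃`, expanded over the indices `i ≥ 1`), then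
`ρ(f, P⁺) = max_{g ≠ 0} ⟨f̃, T g⟩ / (‖f̃‖ ‖g‖)` equals
`√((∑_{i≥1} s_i² u_i²) / (∑_{i≥1} u_i²))`. -/
theorem stmt3 {HA HX : Type*}
    [NormedAddCommGroup HA] [InnerProductSpace ℝ HA] [CompleteSpace HA]
    [NormedAddCommGroup HX] [InnerProductSpace ℝ HX] [CompleteSpace HX]
    (T : HA →L[ℝ] HX)
    (s : ℕ → ℝ) (hs : ∀ i, 0 ≤ s i)
    (μ : ℕ → HX) (ν : ℕ → HA) (hμ : Orthonormal ℝ μ) (hν : Orthonormal ℝ ν)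
    (hT : ∀ i, T (ν i) = s i • μ i)
    (hadj : ∀ (g : HA) (i : ℕ), ⟪μ i, T g⟫_ℝ = s i * ⟪ν i, g⟫_ℝ)
    (hνbasis : ∀ g : HA, HasSum (fun i => ⟪ν i, g⟫_ℝ • ν i) g)
    (u : ℕ → ℝ) (hu : Summable fun i => (u i) ^ 2)
    (f : HX) (hf : HasSum (fun i => u i • μ (i + 1)) f) (hfne : f ≠ 0) :
    IsGreatest { r : ℝ | ∃ g : HA, g ≠ 0 ∧ r = ⟪f, T g⟫_ℝ / (‖f‖ * ‖g‖) }
      (Real.sqrt ((∑' i, (s (i + 1)) ^ 2 * (u i) ^ 2) / ∑' i, (u i) ^ 2)) :=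
  stmt3_general T s μ ν hμ hν hadj u f hf
end

section
/- Sequence-space core of Theorem on conditional variance: Let $(s_i)_{i \ge 1}$ be a sequence in $[0,1]$ and $(u_i)_{i\ge 1} \in \ell^2$ with $\sum_i s_i^2 u_i^2 \ge (1-\epsilon)^2 \sum_i u_i^2$ for some $\epsilon \in (0, 1/2)$. Then $\sum_i (s_i^2 - s_i^4) u_i^2 \le 2\epsilon \sum_i s_i^2 u_i^2$. -/
/-- Sequence-space core of the conditional-variance theorem.
If `(s i) ∈ [0,1]`, `(u i) ∈ ℓ²`, `ε ∈ (0, 1/2)` and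
`∑ s_i² u_i² ≥ (1-ε)² ∑ u_i²`, then `∑ (s_i² - s_i⁴) u_i² ≤ 2 ε ∑ s_i² u_i²`. -/
theorem stmt5 (s u : ℕ → ℝ) (hs : ∀ i, s i ∈ Set.Icc (0 : ℝ) 1)
    (hu : Summable fun i => (u i) ^ 2)
    (ε : ℝ) (hε : ε ∈ Set.Ioo (0 : ℝ) (1 / 2))
    (hcomp : (1 - ε) ^ 2 * ∑' i, (u i) ^ 2 ≤ ∑' i, (s i) ^ 2 * (u i) ^ 2) :
    ∑' i, ((s i) ^ 2 - (s i) ^ 4) * (u i) ^ 2 ≤ 2 * ε * ∑' i, (s i) ^ 2 * (u i) ^ 2 := by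
  obtain ⟨hε0, hε2⟩ := hε
  have hs0 : ∀ i, 0 ≤ s i := fun i => (hs i).1
  have hs1 : ∀ i, s i ≤ 1 := fun i => (hs i).2
  have hle2 : ∀ i, (s i) ^ 2 * (u i) ^ 2 ≤ (u i) ^ 2 := fun i =>
    mul_le_of_le_one_left (sq_nonneg _) (pow_le_one₀ (hs0 i) (hs1 i))
  have hle4 : ∀ i, (s i) ^ 4 * (u i) ^ 2 ≤ (u i) ^ 2 := fun i =>
    mul_le_of_le_one_left (sq_nonneg _) (pow_le_one₀ (hs0 i) (hs1 i))
  have hnn2 : ∀ i, 0 ≤ (s i) ^ 2 * (u i) ^ 2 := fun i =>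
    mul_nonneg (sq_nonneg _) (sq_nonneg _)
  have hnn4 : ∀ i, 0 ≤ (s i) ^ 4 * (u i) ^ 2 := fun i =>
    mul_nonneg (by positivity) (sq_nonneg _)
  have hsu2 : Summable fun i => (s i) ^ 2 * (u i) ^ 2 := hu.of_nonneg_of_le hnn2 hle2
  have hsu4 : Summable fun i => (s i) ^ 4 * (u i) ^ 2 := hu.of_nonneg_of_le hnn4 hle4
  set A := ∑' i, (s i) ^ 2 * (u i) ^ 2 with hA
  set B := ∑' i, (u i) ^ 2 with hB
  set C := ∑' i, (s i) ^ 4 * (u i) ^ 2 with hC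
  have hA0 : 0 ≤ A := tsum_nonneg hnn2
  have hB0 : 0 ≤ B := tsum_nonneg fun i => sq_nonneg _
  have hC0 : 0 ≤ C := tsum_nonneg hnn4
  have hAB : A ≤ B := Summable.tsum_le_tsum hle2 hsu2 hu
  have hgoal : ∑' i, ((s i) ^ 2 - (s i) ^ 4) * (u i) ^ 2 = A - C := by
    rw [hA, hC, ← Summable.tsum_sub hsu2 hsu4]
    congr 1; ext i; ring
  have hCS : A ^ 2 ≤ C * B := by
    have key : ∀ F : Finset ℕ, (∑ i ∈ F, (s i) ^ 2 * (u i) ^ 2) ^ 2 ≤ C * B := by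
      intro F
      have h1 : (∑ i ∈ F, ((s i) ^ 2 * u i) * u i) ^ 2 ≤
          (∑ i ∈ F, ((s i) ^ 2 * u i) ^ 2) * (∑ i ∈ F, (u i) ^ 2) :=
        Finset.sum_mul_sq_le_sq_mul_sq F _ _
      have e1 : (∑ i ∈ F, ((s i) ^ 2 * u i) * u i) = ∑ i ∈ F, (s i) ^ 2 * (u i) ^ 2 := by
        apply Finset.sum_congr rfl; intro i _; ring
      have e2 : (∑ i ∈ F, ((s i) ^ 2 * u i) ^ 2) = ∑ i ∈ F, (s i) ^ 4 * (u i) ^ 2 := by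
        apply Finset.sum_congr rfl; intro i _; ring
      rw [e1, e2] at h1
      have h2 : (∑ i ∈ F, (s i) ^ 4 * (u i) ^ 2) ≤ C :=
        Summable.sum_le_tsum F (fun i _ => hnn4 i) hsu4
      have h3 : (∑ i ∈ F, (u i) ^ 2) ≤ B :=
        Summable.sum_le_tsum F (fun i _ => sq_nonneg _) hu
      have h4 : 0 ≤ ∑ i ∈ F, (u i) ^ 2 := Finset.sum_nonneg fun i _ => sq_nonneg _
      calc (∑ i ∈ F, (s i) ^ 2 * (u i) ^ 2) ^ 2
          ≤ (∑ i ∈ F, (s i) ^ 4 * (u i) ^ 2) * (∑ i ∈ F, (u i) ^ 2) := h1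
        _ ≤ C * B := mul_le_mul h2 h3 h4 hC0
    have htend : Filter.Tendsto (fun F : Finset ℕ => (∑ i ∈ F, (s i) ^ 2 * (u i) ^ 2) ^ 2)
        Filter.atTop (nhds (A ^ 2)) := hsu2.hasSum.pow 2
    exact le_of_tendsto htend (Filter.Eventually.of_forall key)
  rw [hgoal]
  have h1 : (1 - 2 * ε) * B ≤ A := by nlinarith [sq_nonneg ε, hB0]
  rcases eq_or_lt_of_le hB0 with hBz | hBpos
  · have hAz : A = 0 := le_antisymm (hAB.trans_eq hBz.symm) hA0
    rw [hAz]; linarith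
  · have h2 : (1 - 2 * ε) * A * B ≤ C * B := by nlinarith [mul_le_mul_of_nonneg_left h1 hA0]
    have h3 : (1 - 2 * ε) * A ≤ C := le_of_mul_le_mul_right (by linarith) hBpos
    linarith
end

section
/- Lower bound for arbitrary encoders: Let $T_{P^+}$ have singular values $1 = s_0 \ge s_1 \ge \cdots$ with $\epsilon \in (1-s_1, 1 - \sqrt{(s_1^2+s_2^2)/2})$. For any $d$-dimensional encoder $\Phi: \mathcal{X} \to \mathbb{R}^d$ with components in $L^2(P_\mathcal{X})$, there exists a zero-mean unit-norm $f \in L^2(P_\mathcal{X})$ with compatibility $\rho(f, P^+) = 1 - \epsilon$ such that $\min_{w, b} \|w^\top \Phi + b - f\|^2_{P_\mathcal{X}} \ge \frac{s_1^2 - (1-\epsilon)^2}{s_1^2 - s_{d+1}^2}$. -/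
open scoped InnerProductSpace

/-! Since `span{μ₁, …, μ_{d+1}}` has dimension `d + 1 > d`, it contains a unit vector `g`
orthogonal to every `Φᵢ` (and to `μ₀`), so every approximation error `‖wᵀΦ + b - f‖²` is at
least `⟪g, f⟫²`. Write `g = a μ₁ + b t` with `t ⊥ μ₁` a unit vector of the span and
`a² + b² = 1`. The compatibility of `f = ±√(1-Y) μ₁ + √Y t` is `s₁²(1-Y) + Y c` with
`c = ρ(t)² ∈ [s_{d+1}², s₂²]`; it equals `(1-ε)²` for `Y = (s₁² - (1-ε)²)/(s₁² - c)`, and the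
upper bound on `ε` gives `Y ≤ 1/2`. With the right sign,
`⟪g, f⟫² ≥ (1-Y)a² + Y b² ≥ Y ≥ (s₁² - (1-ε)²)/(s₁² - s_{d+1}²)`. -/

section InnerProductSpace

variable {E : Type*} [NormedAddCommGroup E] [InnerProductSpace ℝ E]

lemma sq_inner_le_sq_norm_sub_of_inner_eq_zero {g v : E} (hg : ‖g‖ = 1) (hv : ⟪g, v⟫_ℝ = 0)
    (f : E) : ⟪g, f⟫_ℝ ^ 2 ≤ ‖v - f‖ ^ 2 := by
  have h := abs_real_inner_le_norm g (v - f)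
  rw [hg, one_mul, inner_sub_right, hv, zero_sub, abs_neg] at h
  exact sq_le_sq' (abs_le.mp h).1 (abs_le.mp h).2

lemma norm_smul_add_smul_sq {e t : E} (he : ‖e‖ = 1) (ht : ‖t‖ = 1) (het : ⟪e, t⟫_ℝ = 0)
    (a b : ℝ) : ‖a • e + b • t‖ ^ 2 = a ^ 2 + b ^ 2 := by
  rw [norm_add_sq_real, inner_smul_left, inner_smul_right, het, norm_smul, norm_smul, he, ht]
  simp

lemma exists_unit_orthogonal_inner_sq_add_inner_sq {e e' : E} (he : ‖e‖ = 1) (he' : ‖e'‖ = 1)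
    (hee' : ⟪e, e'⟫_ℝ = 0) (g : E) :
    ∃ t : E, ‖t‖ = 1 ∧ ⟪e, t⟫_ℝ = 0 ∧ ⟪e, g⟫_ℝ ^ 2 + ⟪t, g⟫_ℝ ^ 2 = ‖g‖ ^ 2 := by
  set a := ⟪e, g⟫_ℝ
  set g' := g - a • e
  have hg' : ⟪e, g'⟫_ℝ = 0 := by
    rw [inner_sub_right, inner_smul_right, real_inner_self_eq_norm_sq, he]; ring
  have hg : g = a • e + g' := (add_sub_cancel _ _).symm
  have hnorm : ‖g‖ ^ 2 = a ^ 2 + ‖g'‖ ^ 2 := by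
    rw [hg, norm_add_sq_real, inner_smul_left, hg', norm_smul, he]
    simp
  by_cases h0 : g' = 0
  · refine ⟨e', he', hee', ?_⟩
    have : ⟪e', g⟫_ℝ = 0 := by
      rw [hg, h0, add_zero, inner_smul_right, real_inner_comm, hee', mul_zero]
    rw [this, hnorm, h0]
    simp
  · have hpos : 0 < ‖g'‖ := norm_pos_iff.mpr h0
    refine ⟨‖g'‖⁻¹ • g', ?_, ?_, ?_⟩
    · rw [norm_smul, norm_inv, norm_norm, inv_mul_cancel₀ hpos.ne']
    · rw [inner_smul_right, hg', mul_zero]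
    · have : ⟪‖g'‖⁻¹ • g', g⟫_ℝ = ‖g'‖ := by
        rw [hg, real_inner_smul_left, inner_add_right, inner_smul_right, real_inner_comm, hg',
          real_inner_self_eq_norm_sq]
        field_simp
        ring
      rw [this, hnorm]

end InnerProductSpace

lemma exists_sq_eq_one_sq_add_sq_le (p q : ℝ) :
    ∃ σ : ℝ, σ ^ 2 = 1 ∧ p ^ 2 + q ^ 2 ≤ (σ * p + q) ^ 2 := by
  rcases le_total 0 (p * q) with h | h
  · exact ⟨1, by norm_num, by nlinarith⟩
  · exact ⟨-1, by norm_num, by nlinarith⟩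

section Euclidean

variable {n : ℕ} (κ : ℕ → ℝ)

def weightedSq {m : ℕ} (x : EuclideanSpace ℝ (Fin m)) : ℝ := ∑ j : Fin m, κ j * x j ^ 2

lemma weightedSq_smul_single_zero_add_smul {t : EuclideanSpace ℝ (Fin (n + 1))} (ht : t 0 = 0)
    (a b : ℝ) :
    weightedSq κ (a • EuclideanSpace.single 0 1 + b • t) =
      κ 0 * a ^ 2 + b ^ 2 * weightedSq κ t := by
  simp [weightedSq, Fin.sum_univ_succ, ht, Finset.mul_sum, mul_pow, mul_left_comm]

variable {κ}

lemma weightedSq_le_of_apply_zero (hκ : Antitone κ) {t : EuclideanSpace ℝ (Fin (n + 1))}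
    (ht : ‖t‖ = 1) (ht0 : t 0 = 0) : weightedSq κ t ≤ κ 1 := by
  have hsum : ∑ j, t j ^ 2 = 1 := by rw [← EuclideanSpace.real_norm_sq_eq, ht, one_pow]
  calc weightedSq κ t ≤ ∑ j, κ 1 * t j ^ 2 := by
        refine Finset.sum_le_sum fun j _ => ?_
        rcases Fin.eq_zero_or_eq_succ j with rfl | ⟨k, rfl⟩
        · simp [ht0]
        · exact mul_le_mul_of_nonneg_right (hκ (by simp)) (sq_nonneg _)
    _ = κ 1 := by rw [← Finset.mul_sum, hsum, mul_one]

lemma le_weightedSq (hκ : Antitone κ) {t : EuclideanSpace ℝ (Fin (n + 1))} (ht : ‖t‖ = 1) :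
    κ n ≤ weightedSq κ t := by
  have hsum : ∑ j, t j ^ 2 = 1 := by rw [← EuclideanSpace.real_norm_sq_eq, ht, one_pow]
  calc κ n = ∑ j, κ n * t j ^ 2 := by rw [← Finset.mul_sum, hsum, mul_one]
    _ ≤ weightedSq κ t := Finset.sum_le_sum fun j _ =>
        mul_le_mul_of_nonneg_right (hκ (Nat.lt_succ_iff.mp j.isLt)) (sq_nonneg _)

lemma exists_norm_eq_one_weightedSq_eq_le_inner_sq (hκ : Antitone κ) {r : ℝ}
    (hr₁ : (κ 0 + κ 1) / 2 < r) (hr₀ : r < κ 0) {g : EuclideanSpace ℝ (Fin (n + 2))}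
    (hg : ‖g‖ = 1) :
    ∃ u : EuclideanSpace ℝ (Fin (n + 2)), ‖u‖ = 1 ∧ weightedSq κ u = r ∧
      (κ 0 - r) / (κ 0 - κ (n + 1)) ≤ ⟪g, u⟫_ℝ ^ 2 := by
  set e : EuclideanSpace ℝ (Fin (n + 2)) := EuclideanSpace.single 0 1
  obtain ⟨t, ht, het, hgt⟩ := exists_unit_orthogonal_inner_sq_add_inner_sq (e := e)
    (e' := EuclideanSpace.single 1 1) (by simp [e]) (by simp)
    (by rw [EuclideanSpace.inner_single_left]; simp) g
  have ht0 : t 0 = 0 := by simpa [e, EuclideanSpace.inner_single_left] using het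
  rw [hg, one_pow] at hgt
  set c := weightedSq κ t
  have hc₁ : c ≤ κ 1 := weightedSq_le_of_apply_zero hκ ht ht0
  have hc₀ : κ (n + 1) ≤ c := le_weightedSq hκ ht
  have hden : 0 < κ 0 - c := by linarith
  set Y := (κ 0 - r) / (κ 0 - c)
  have hY₀ : 0 ≤ Y := div_nonneg (by linarith) hden.le
  have hY : Y ≤ 1 / 2 := by rw [div_le_iff₀ hden]; linarith
  have hYr : κ 0 * (1 - Y) + Y * c = r := by
    have : Y * (κ 0 - c) = κ 0 - r := div_mul_cancel₀ _ hden.ne'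
    linarith
  obtain ⟨σ, hσ, hσle⟩ := exists_sq_eq_one_sq_add_sq_le (√(1 - Y) * ⟪e, g⟫_ℝ) (√Y * ⟪t, g⟫_ℝ)
  have hsq₁ : √(1 - Y) ^ 2 = 1 - Y := Real.sq_sqrt (by linarith)
  have hsq₂ : √Y ^ 2 = Y := Real.sq_sqrt hY₀
  refine ⟨(σ * √(1 - Y)) • e + √Y • t, ?_, ?_, ?_⟩
  · rw [← pow_eq_one_iff_of_nonneg (norm_nonneg _) two_ne_zero,
      norm_smul_add_smul_sq (by simp [e]) ht het, mul_pow, hσ, hsq₁, hsq₂]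
    ring
  · rw [weightedSq_smul_single_zero_add_smul κ ht0, mul_pow, hσ, hsq₁, hsq₂, ← hYr]
    ring
  · have hinner : ⟪g, (σ * √(1 - Y)) • e + √Y • t⟫_ℝ =
        σ * (√(1 - Y) * ⟪e, g⟫_ℝ) + √Y * ⟪t, g⟫_ℝ := by
      rw [inner_add_right, inner_smul_right, inner_smul_right, real_inner_comm g e,
        real_inner_comm g t]
      ring
    calc (κ 0 - r) / (κ 0 - κ (n + 1)) ≤ Y :=
          div_le_div_of_nonneg_left (by linarith) hden (by linarith)
      _ = Y * (⟪e, g⟫_ℝ ^ 2 + ⟪t, g⟫_ℝ ^ 2) := by rw [hgt, mul_one]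
      _ ≤ (1 - Y) * ⟪e, g⟫_ℝ ^ 2 + Y * ⟪t, g⟫_ℝ ^ 2 := by nlinarith [sq_nonneg ⟪e, g⟫_ℝ]
      _ = (√(1 - Y) * ⟪e, g⟫_ℝ) ^ 2 + (√Y * ⟪t, g⟫_ℝ) ^ 2 := by
          rw [mul_pow, mul_pow, hsq₁, hsq₂]
      _ ≤ _ := hinner ▸ hσle

end Euclidean

lemma exists_norm_eq_one_forall_inner_eq_zero {E F : Type*} [NormedAddCommGroup E]
    [InnerProductSpace ℝ E] [NormedAddCommGroup F] [InnerProductSpace ℝ F] [FiniteDimensional ℝ F]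
    {d : ℕ} (Φ : Fin d → E) (L : F →ₗ[ℝ] E) (hd : d < Module.finrank ℝ F) :
    ∃ x : F, ‖x‖ = 1 ∧ ∀ i, ⟪Φ i, L x⟫_ℝ = 0 := by
  let A : F →ₗ[ℝ] Fin d → ℝ := LinearMap.pi fun i => innerₛₗ ℝ (Φ i) ∘ₗ L
  obtain ⟨x, hxA, hx⟩ := Submodule.exists_mem_ne_zero_of_ne_bot
    (LinearMap.ker_ne_bot_of_finrank_lt (f := A) (by simpa using hd))
  refine ⟨‖x‖⁻¹ • x, norm_smul_inv_norm hx, fun i => ?_⟩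
  rw [map_smul, inner_smul_right, mul_eq_zero]
  exact Or.inr (congrFun (LinearMap.mem_ker.mp hxA) i)

section TailEmbedding

variable {H : Type*} [NormedAddCommGroup H] [InnerProductSpace ℝ H]

noncomputable def tailEmbedding (μ : ℕ → H) (m : ℕ) : EuclideanSpace ℝ (Fin m) →ₗ[ℝ] H :=
  Fintype.linearCombination ℝ (fun j : Fin m => μ (j + 1)) ∘ₗ
    (WithLp.linearEquiv 2 ℝ (Fin m → ℝ)).toLinearMap

variable {μ : ℕ → H} {m : ℕ}

lemma tailEmbedding_apply (x : EuclideanSpace ℝ (Fin m)) :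
    tailEmbedding μ m x = ∑ j, x j • μ (j + 1) := by
  simp [tailEmbedding, Fintype.linearCombination_apply]

lemma inner_tailEmbedding (hμ : Orthonormal ℝ μ) (x y : EuclideanSpace ℝ (Fin m)) :
    ⟪tailEmbedding μ m x, tailEmbedding μ m y⟫_ℝ = ⟪x, y⟫_ℝ := by
  have hμ' : Orthonormal ℝ fun j : Fin m => μ (j + 1) :=
    hμ.comp _ fun i j h => Fin.ext (Nat.succ_injective h)
  rw [tailEmbedding_apply, tailEmbedding_apply, hμ'.inner_sum, PiLp.inner_apply]
  simp [mul_comm]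

lemma norm_tailEmbedding (hμ : Orthonormal ℝ μ) (x : EuclideanSpace ℝ (Fin m)) :
    ‖tailEmbedding μ m x‖ = ‖x‖ := by
  rw [norm_eq_sqrt_real_inner, inner_tailEmbedding hμ, ← norm_eq_sqrt_real_inner]

lemma inner_zero_tailEmbedding (hμ : Orthonormal ℝ μ) (x : EuclideanSpace ℝ (Fin m)) :
    ⟪μ 0, tailEmbedding μ m x⟫_ℝ = 0 := by
  rw [tailEmbedding_apply, inner_sum]
  refine Finset.sum_eq_zero fun j _ => ?_
  rw [inner_smul_right, orthonormal_iff_ite.mp hμ, if_neg (by omega), mul_zero]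

lemma inner_succ_tailEmbedding (hμ : Orthonormal ℝ μ) (x : EuclideanSpace ℝ (Fin m)) (k : ℕ) :
    ⟪μ (k + 1), tailEmbedding μ m x⟫_ℝ = if h : k < m then x ⟨k, h⟩ else 0 := by
  rw [tailEmbedding_apply, inner_sum]
  simp_rw [inner_smul_right, orthonormal_iff_ite.mp hμ, add_left_inj, mul_ite, mul_one, mul_zero]
  split_ifs with h
  · simp_rw [show ∀ j : Fin m, k = j ↔ j = ⟨k, h⟩ from fun j => by rw [Fin.ext_iff, eq_comm]]
    simp
  · exact Finset.sum_eq_zero fun j _ => if_neg (by omega)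

lemma tsum_mul_inner_succ_tailEmbedding_sq (hμ : Orthonormal ℝ μ) (κ : ℕ → ℝ)
    (x : EuclideanSpace ℝ (Fin m)) :
    ∑' k, κ k * ⟪μ (k + 1), tailEmbedding μ m x⟫_ℝ ^ 2 = weightedSq κ x := by
  rw [tsum_eq_sum (s := Finset.range m) fun k hk => by
    rw [inner_succ_tailEmbedding hμ, dif_neg (by simpa using hk)]; simp]
  rw [← Fin.sum_univ_eq_sum_range (fun k => κ k * ⟪μ (k + 1), tailEmbedding μ m x⟫_ℝ ^ 2)]
  simp [weightedSq, inner_succ_tailEmbedding hμ]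

end TailEmbedding

theorem stmt8_general {H : Type*} [NormedAddCommGroup H] [InnerProductSpace ℝ H]
    (μ : ℕ → H) (hμ : Orthonormal ℝ μ)
    (s : ℕ → ℝ) (hs : ∀ i, 0 ≤ s i) (hmono : Antitone s)
    (d : ℕ) (hd : 0 < d) (ε : ℝ)
    (hε1 : 1 - s 1 < ε) (hε2 : ε < 1 - Real.sqrt (((s 1) ^ 2 + (s 2) ^ 2) / 2))
    (Φ : Fin d → H) :
    ∃ f : H, ⟪μ 0, f⟫_ℝ = 0 ∧ ‖f‖ = 1 ∧
      -- compatibility ρ(f, P⁺) = 1 - ε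
      (∑' i, (s (i + 1)) ^ 2 * ⟪μ (i + 1), f⟫_ℝ ^ 2) = (1 - ε) ^ 2 ∧
      ((s 1) ^ 2 - (1 - ε) ^ 2) / ((s 1) ^ 2 - (s (d + 1)) ^ 2) ≤
        ⨅ w : Fin d → ℝ, ⨅ b : ℝ, ‖(∑ i, w i • Φ i) + b • μ 0 - f‖ ^ 2 := by
  obtain ⟨n, rfl⟩ : ∃ n, d = n + 1 := ⟨d - 1, by omega⟩
  obtain ⟨g, hg, hgΦ⟩ :=
    exists_norm_eq_one_forall_inner_eq_zero Φ (tailEmbedding μ (n + 2)) (by simp)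
  have hκ : Antitone fun i => s (i + 1) ^ 2 := fun i j hij =>
    pow_le_pow_left₀ (hs _) (hmono (Nat.succ_le_succ hij)) 2
  have hε : 0 < 1 - ε := (Real.sqrt_nonneg _).trans_lt (by linarith)
  have hr₁ : (s 1 ^ 2 + s 2 ^ 2) / 2 < (1 - ε) ^ 2 := (Real.sqrt_lt' hε).mp (by linarith)
  have hr₀ : (1 - ε) ^ 2 < s 1 ^ 2 := pow_lt_pow_left₀ (by linarith) hε.le two_ne_zero
  obtain ⟨u, hu, hQ, hbound⟩ := exists_norm_eq_one_weightedSq_eq_le_inner_sq hκ hr₁ hr₀ hg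
  refine ⟨tailEmbedding μ (n + 2) u, inner_zero_tailEmbedding hμ u,
    (norm_tailEmbedding hμ u).trans hu, (tsum_mul_inner_succ_tailEmbedding_sq hμ _ u).trans hQ,
    le_ciInf fun w => le_ciInf fun b => hbound.trans ?_⟩
  rw [← inner_tailEmbedding hμ]
  refine sq_inner_le_sq_norm_sub_of_inner_eq_zero ((norm_tailEmbedding hμ g).trans hg) ?_ _
  simp [inner_add_right, inner_sum, inner_smul_right, real_inner_comm, hgΦ,
    inner_zero_tailEmbedding hμ]

/-- Lower bound for arbitrary encoders. With singular values
`1 = s_0 ≥ s_1 ≥ ⋯` and `ε ∈ (1 - s_1, 1 - √((s_1² + s_2²)/2))`, for any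
`d`-dimensional encoder `Φ` there exists a zero-mean unit-norm `f` with
compatibility `ρ(f, P⁺) = 1 - ε` such that
`min_{w,b} ‖wᵀΦ + b - f‖² ≥ (s_1² - (1-ε)²)/(s_1² - s_{d+1}²)`. -/
theorem stmt8 {H : Type*} [NormedAddCommGroup H] [InnerProductSpace ℝ H]
    [CompleteSpace H]
    (μ : ℕ → H) (hμ : Orthonormal ℝ μ)
    (hμbasis : ∀ f : H, HasSum (fun i => ⟪μ i, f⟫_ℝ • μ i) f)
    (s : ℕ → ℝ) (hs0 : s 0 = 1) (hs : ∀ i, 0 ≤ s i) (hmono : Antitone s)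
    (d : ℕ) (hd : 0 < d) (ε : ℝ)
    (hε1 : 1 - s 1 < ε) (hε2 : ε < 1 - Real.sqrt (((s 1) ^ 2 + (s 2) ^ 2) / 2))
    (Φ : Fin d → H) :
    ∃ f : H, ⟪μ 0, f⟫_ℝ = 0 ∧ ‖f‖ = 1 ∧
      -- compatibility ρ(f, P⁺) = 1 - ε
      (∑' i, (s (i + 1)) ^ 2 * ⟪μ (i + 1), f⟫_ℝ ^ 2) = (1 - ε) ^ 2 ∧
      ((s 1) ^ 2 - (1 - ε) ^ 2) / ((s 1) ^ 2 - (s (d + 1)) ^ 2) ≤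
        ⨅ w : Fin d → ℝ, ⨅ b : ℝ, ‖(∑ i, w i • Φ i) + b • μ 0 - f‖ ^ 2 :=
  stmt8_general μ hμ s hs hmono d hd ε hε1 hε2 Φ
end

section
/- Minimizer of spectral contrastive loss (matrix form): Let $D = \mathrm{diag}(s_1^2, s_2^2, \ldots)$ with $s_1 \ge s_2 \ge \cdots \ge 0$ (possibly infinite, in $\ell^2$). For any matrix $C$ with $d$ rows (columns indexed by $i \ge 1$) and $B = C^\top C$, the contrastive loss $\mathcal{L}(C) = -\sum_i s_i^2 B_{ii} + \frac{1}{2}\sum_{i,j} B_{ij}^2$ satisfies $\mathcal{L}(C) = \frac{1}{2}\|B - D\|_F^2 - \frac{1}{2}\|D\|_F^2$, and is minimized over rank-$\le d$ positive semidefinite $B$ exactly when $B = \mathrm{diag}(s_1^2, \ldots, s_d^2, 0, 0, \ldots)$ (assuming $s_d > s_{d+1}$). -/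
/-!
Rotating the rows of `C` by the eigenvectors of their Gram matrix makes them orthogonal without
changing `B = CᵀC`, so `B = ∑ₖ λₖ eₖ eₖᵀ` with orthonormal `eₖ`. Writing `D = diag (s ^ 2)`,
`‖B‖² - 2⟪D, B⟫ = ∑ₖ (λₖ² - 2 λₖ ⟪eₖ, D eₖ⟫) ≥ -∑ₖ ⟪eₖ, D eₖ⟫² ≥ -∑ₖ ⟪eₖ, D² eₖ⟫ = -∑ᵢ uᵢ sᵢ⁴`
by Cauchy–Schwarz, where the leverages `uᵢ = ∑ₖ eₖᵢ²` satisfy `0 ≤ uᵢ ≤ 1` and `∑ᵢ uᵢ ≤ d`.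
The bathtub principle then gives `∑ᵢ uᵢ sᵢ⁴ ≤ ∑_{i<d} sᵢ⁴`. At a minimiser the gap
`s_d < s_{d-1}` forces `uᵢ = 0`, hence `Bᵢᵢ = 0`, for `i ≥ d`; so `B` has the same weighted trace
against `D` as against its truncation `Bd`, and expanding `‖B - Bd‖²` shows that it vanishes.
-/

open Finset Matrix

variable {ι : Type*}

lemma Antitone.abs_le_apply_zero {a : ℕ → ℝ} (ha : Antitone a) (ha0 : ∀ i, 0 ≤ a i) (i : ℕ) :
    |a i| ≤ a 0 :=
  (abs_of_nonneg (ha0 i)).trans_le (ha (Nat.zero_le i))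

lemma summable_mul_of_summable_sq {f g : ℕ → ℝ} (hf : Summable fun i => f i ^ 2)
    (hg : Summable fun i => g i ^ 2) : Summable fun i => f i * g i := by
  refine Summable.of_norm_bounded ((hf.add hg).div_const 2) fun i => ?_
  rw [Real.norm_eq_abs, abs_mul]
  nlinarith [sq_nonneg (|f i| - |g i|), sq_abs (f i), sq_abs (g i)]

lemma Summable.mul_of_abs_le {f a : ℕ → ℝ} {M : ℝ} (hf : Summable f) (ha : ∀ i, |a i| ≤ M) :
    Summable fun i => a i * f i :=
  hf.abs.mul_left M |>.of_norm_bounded fun i => by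
    rw [Real.norm_eq_abs, abs_mul]
    exact mul_le_mul_of_nonneg_right (ha i) (abs_nonneg _)

lemma sq_tsum_mul_le {f g : ℕ → ℝ} (hf : Summable fun i => f i ^ 2)
    (hg : Summable fun i => g i ^ 2) :
    (∑' i, f i * g i) ^ 2 ≤ (∑' i, f i ^ 2) * ∑' i, g i ^ 2 := by
  refine le_of_tendsto' ((summable_mul_of_summable_sq hf hg).hasSum.pow 2) fun s => ?_
  calc (∑ i ∈ s, f i * g i) ^ 2 ≤ (∑ i ∈ s, f i ^ 2) * ∑ i ∈ s, g i ^ 2 :=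
        sum_mul_sq_le_sq_mul_sq s f g
    _ ≤ (∑' i, f i ^ 2) * ∑' i, g i ^ 2 :=
        mul_le_mul (hf.sum_le_tsum s fun _ _ => sq_nonneg _)
          (hg.sum_le_tsum s fun _ _ => sq_nonneg _) (sum_nonneg fun i _ => sq_nonneg _)
          (tsum_nonneg fun i => sq_nonneg _)

lemma summable_sum_mul_sq [Fintype ι] {f : ι → ℕ → ℝ}
    (hf : ∀ k, Summable fun i => f k i ^ 2) (c : ι → ℝ) :
    Summable fun i => (∑ k, c k * f k i) ^ 2 :=
  Summable.of_nonneg_of_le (fun _ => sq_nonneg _)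
    (fun _ => sum_mul_sq_le_sq_mul_sq univ c _)
    ((summable_sum fun k _ => hf k).mul_left (∑ k, c k ^ 2))

lemma HasSum.sub_ite_sq {β : Type*} [DecidableEq β] {f : β → ℝ} {r : ℝ}
    (hf : HasSum (fun j => f j ^ 2) r) (i : β) (c : ℝ) :
    HasSum (fun j => (f j - if i = j then c else 0) ^ 2) (r - 2 * (c * f i) + c ^ 2) := by
  convert hf.add (hasSum_ite_eq i (c ^ 2 - 2 * (c * f i))) using 1
  · ext j
    rcases eq_or_ne j i with rfl | hji
    · simp only [if_true]; ring
    · simp [hji, Ne.symm hji]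
  · ring

lemma hasSum_tsum_sub_ite_sq {B : ℕ → ℕ → ℝ} {a r : ℕ → ℝ} {R T A : ℝ}
    (hrow : ∀ i, HasSum (fun j => B i j ^ 2) (r i)) (hR : HasSum r R)
    (hT : HasSum (fun i => a i * B i i) T) (hA : HasSum (fun i => a i ^ 2) A) :
    HasSum (fun i => ∑' j, (B i j - if i = j then a i else 0) ^ 2) (R - 2 * T + A) := by
  refine ((hR.sub (hT.mul_left 2)).add hA).congr_fun fun i => ?_
  exact ((hrow i).sub_ite_sq i (a i)).tsum_eq

lemma eq_zero_of_hasSum_tsum_sq {E : ℕ → ℕ → ℝ} (hrow : ∀ i, Summable fun j => E i j ^ 2)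
    (h : HasSum (fun i => ∑' j, E i j ^ 2) 0) : E = 0 := by
  rw [hasSum_zero_iff_of_nonneg fun i => tsum_nonneg fun j => sq_nonneg _] at h
  ext i j
  have hi : HasSum (fun j => E i j ^ 2) 0 := by simpa [congrFun h i] using (hrow i).hasSum
  rw [hasSum_zero_iff_of_nonneg fun j => sq_nonneg _] at hi
  exact pow_eq_zero_iff two_ne_zero |>.mp (congrFun hi j)

lemma neg_div_le_sq_sub_two_mul {l q r : ℝ} (hl : 0 ≤ l) (h : q ^ 2 ≤ r * l) :
    -(r / l) ≤ l ^ 2 - 2 * q := by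
  rcases hl.eq_or_lt with rfl | hl
  · have : q = 0 := pow_eq_zero_iff two_ne_zero |>.mp (le_antisymm (by simpa using h) (sq_nonneg q))
    simp [this]
  · have hqr : q ^ 2 / l ^ 2 ≤ r / l := by
      rw [div_le_div_iff₀ (by positivity) hl]; nlinarith
    have hsq : l ^ 2 - 2 * q + q ^ 2 / l ^ 2 = (l - q / l) ^ 2 := by field_simp; ring
    nlinarith [sq_nonneg (l - q / l)]

/-- Bathtub principle: weights `0 ≤ u ≤ 1` of total mass at most `d` are best placed on the `d`
largest values of `a`, and mass put beyond index `d` costs at least the gap `a (d - 1) - a d`. -/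
lemma sub_mul_tsum_tail_le_sum_range_sub_tsum_mul {a u : ℕ → ℝ} (d : ℕ) (ha : Antitone a)
    (ha0 : ∀ i, 0 ≤ a i) (hu0 : ∀ i, 0 ≤ u i) (hu1 : ∀ i, u i ≤ 1) (hu : Summable u)
    (hud : ∑' i, u i ≤ d) :
    (a (d - 1) - a d) * ∑' i, u (i + d) ≤ ∑ i ∈ range d, a i - ∑' i, a i * u i := by
  have hau : Summable fun i => a i * u i :=
    hu.mul_of_abs_le (ha.abs_le_apply_zero ha0)
  have hsplit := hau.sum_add_tsum_nat_add d
  have husplit := hu.sum_add_tsum_nat_add d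
  set T := ∑' i, u (i + d)
  have htail : ∑' i, a (i + d) * u (i + d) ≤ a d * T := by
    rw [← tsum_mul_left]
    exact ((summable_nat_add_iff d).mpr hau).tsum_le_tsum
      (fun i => mul_le_mul_of_nonneg_right (ha (Nat.le_add_left d i)) (hu0 _))
      (((summable_nat_add_iff d).mpr hu).mul_left _)
  have hhead : a (d - 1) * ∑ i ∈ range d, (1 - u i) ≤ ∑ i ∈ range d, a i * (1 - u i) := by
    rw [mul_sum]
    exact sum_le_sum fun i hi => mul_le_mul_of_nonneg_right
      (ha (Nat.le_sub_one_of_lt (mem_range.mp hi))) (sub_nonneg.mpr (hu1 i))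
  have hslack : T ≤ ∑ i ∈ range d, (1 - u i) := by
    rw [sum_sub_distrib, sum_const, card_range, nsmul_one]
    linarith
  have := mul_le_mul_of_nonneg_left hslack (ha0 (d - 1))
  have hcomb : ∑ i ∈ range d, a i * (1 - u i) = ∑ i ∈ range d, a i - ∑ i ∈ range d, a i * u i := by
    rw [← sum_sub_distrib]; exact sum_congr rfl fun i _ => by ring
  linarith

noncomputable def rowGram (C : Matrix ι ℕ ℝ) : Matrix ι ι ℝ := of fun k l => ∑' i, C k i * C l i

lemma hasSum_sq_rowGram_self {C : Matrix ι ℕ ℝ} (hC : ∀ k, Summable fun i => C k i ^ 2) (k : ι) :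
    HasSum (fun i => C k i ^ 2) (rowGram C k k) := by
  simpa only [rowGram, of_apply, sq] using (hC k).hasSum

lemma rowGram_self_nonneg (v : Matrix ι ℕ ℝ) (k : ι) : 0 ≤ rowGram v k k :=
  tsum_nonneg fun i => mul_self_nonneg (v k i)

lemma rowGram_mul [Fintype ι] {κ : Type*} [Fintype κ] {C : Matrix ι ℕ ℝ}
    (hC : ∀ k, Summable fun i => C k i ^ 2) (A : Matrix κ ι ℝ) :
    rowGram (A * C) = A * rowGram C * Aᵀ := by
  ext k l
  have hCC : ∀ m m', Summable fun i => C m i * C m' i :=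
    fun m m' => summable_mul_of_summable_sq (hC m) (hC m')
  have hexpand : ∀ i, (∑ m, A k m * C m i) * (∑ m', A l m' * C m' i) =
      ∑ m, ∑ m', A k m * A l m' * (C m i * C m' i) := fun i => by
    rw [sum_mul_sum]; exact sum_congr rfl fun m _ => sum_congr rfl fun m' _ => by ring
  simp only [rowGram, of_apply, mul_apply, transpose_apply, tsum_congr hexpand]
  rw [Summable.tsum_finsetSum fun m _ => summable_sum fun m' _ => (hCC m m').mul_left _]
  simp_rw [sum_mul]
  conv_rhs => rw [sum_comm]
  refine sum_congr rfl fun m _ => ?_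
  rw [Summable.tsum_finsetSum fun m' _ => (hCC m m').mul_left _]
  refine sum_congr rfl fun m' _ => ?_
  rw [(hCC m m').tsum_mul_left]
  ring

lemma isHermitian_rowGram (C : Matrix ι ℕ ℝ) : (rowGram C).IsHermitian := by
  ext k l
  simp only [conjTranspose_apply, rowGram, of_apply, star_trivial]
  exact tsum_congr fun i => mul_comm _ _

lemma exists_orthogonal_transpose_mul_self_eq [Fintype ι] [DecidableEq ι] {C : Matrix ι ℕ ℝ}
    (hC : ∀ k, Summable fun i => C k i ^ 2) :
    ∃ v : Matrix ι ℕ ℝ, (∀ k, Summable fun i => v k i ^ 2) ∧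
      (∀ k l, k ≠ l → rowGram v k l = 0) ∧ vᵀ * v = Cᵀ * C := by
  set U := (isHermitian_rowGram C).eigenvectorUnitary
  have hU : (star (U : Matrix ι ι ℝ))ᵀ = U := by simp [star_eq_conjTranspose]
  refine ⟨star (U : Matrix ι ι ℝ) * C, fun k => summable_sum_mul_sq hC _,
    fun k l hkl => ?_, ?_⟩
  · have hdiag := (isHermitian_rowGram C).conjStarAlgAut_star_eigenvectorUnitary
    rw [Unitary.conjStarAlgAut_star_apply] at hdiag
    rw [rowGram_mul hC, hU, hdiag, diagonal_apply_ne _ hkl]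
  · rw [transpose_mul, hU, Matrix.mul_assoc, ← Matrix.mul_assoc (U : Matrix ι ι ℝ),
      Unitary.mul_star_self_of_mem U.prop, Matrix.one_mul]

section Orthogonal

variable [Fintype ι] {v : Matrix ι ℕ ℝ}

lemma hasSum_sum_mul_sq_of_orthogonal (hv : ∀ k, Summable fun i => v k i ^ 2)
    (horth : ∀ k l, k ≠ l → rowGram v k l = 0) (c : ι → ℝ) :
    HasSum (fun i => (∑ k, c k * v k i) ^ 2) (∑ k, c k ^ 2 * rowGram v k k) := by
  classical
  have h : HasSum (fun i => ∑ k, ∑ l, c k * c l * (v k i * v l i))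
      (∑ k, ∑ l, c k * c l * rowGram v k l) :=
    hasSum_sum fun k _ => hasSum_sum fun l _ =>
      (summable_mul_of_summable_sq (hv k) (hv l)).hasSum.mul_left _
  convert h using 1
  · ext i
    rw [sq, sum_mul_sum]
    exact sum_congr rfl fun k _ => sum_congr rfl fun l _ => by ring
  · refine sum_congr rfl fun k _ => ?_
    rw [sum_eq_single k (fun l _ hlk => by rw [horth k l hlk.symm, mul_zero]) (by simp)]
    ring

lemma hasSum_transpose_mul_self_sq (hv : ∀ k, Summable fun i => v k i ^ 2)
    (horth : ∀ k l, k ≠ l → rowGram v k l = 0) (i : ℕ) :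
    HasSum (fun j => (vᵀ * v) i j ^ 2) (∑ k, v k i ^ 2 * rowGram v k k) :=
  hasSum_sum_mul_sq_of_orthogonal hv horth fun k => v k i

lemma hasSum_sum_sq_mul_rowGram_self (hv : ∀ k, Summable fun i => v k i ^ 2) :
    HasSum (fun i => ∑ k, v k i ^ 2 * rowGram v k k) (∑ k, rowGram v k k ^ 2) :=
  hasSum_sum fun k _ => by
    simpa only [sq (rowGram v k k)] using (hasSum_sq_rowGram_self hv k).mul_right _

lemma hasSum_mul_transpose_mul_self_diag (hv : ∀ k, Summable fun i => v k i ^ 2)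
    {a : ℕ → ℝ} {M : ℝ} (ha : ∀ i, |a i| ≤ M) :
    HasSum (fun i => a i * (vᵀ * v) i i) (∑ k, ∑' i, a i * v k i ^ 2) := by
  convert hasSum_sum fun k _ => ((hv k).mul_of_abs_le ha).hasSum using 1
  ext i
  simp only [mul_apply, transpose_apply, mul_sum, sq]

/-- The diagonal of the orthogonal projection onto the span of the (orthogonal) rows of `v`;
a zero row contributes `x / 0 = 0`. -/
noncomputable def leverage (v : Matrix ι ℕ ℝ) (i : ℕ) : ℝ := ∑ k, v k i ^ 2 / rowGram v k k

lemma leverage_nonneg (v : Matrix ι ℕ ℝ) (i : ℕ) : 0 ≤ leverage v i :=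
  sum_nonneg fun k _ => div_nonneg (sq_nonneg _) (rowGram_self_nonneg v k)

lemma leverage_le_one (hv : ∀ k, Summable fun i => v k i ^ 2)
    (horth : ∀ k l, k ≠ l → rowGram v k l = 0) (i : ℕ) : leverage v i ≤ 1 := by
  -- `y = ∑ₖ (v k i / ‖v k‖²) v k` has `y i = ‖y‖² = leverage v i`, and `(y i)² ≤ ‖y‖²`.
  set c : ι → ℝ := fun k => v k i / rowGram v k k
  have hy := hasSum_sum_mul_sq_of_orthogonal hv horth c
  have hnorm : ∑ k, c k ^ 2 * rowGram v k k = leverage v i := by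
    refine sum_congr rfl fun k _ => ?_
    rcases (rowGram_self_nonneg v k).eq_or_lt with h | h
    · simp [c, ← h]
    · simp only [c]
      field_simp
  have hcoord : ∑ k, c k * v k i = leverage v i :=
    sum_congr rfl fun k _ => by simp only [c]; ring
  have := le_hasSum hy i fun _ _ => sq_nonneg _
  rw [hcoord, hnorm] at this
  nlinarith [leverage_nonneg v i]

lemma hasSum_leverage (hv : ∀ k, Summable fun i => v k i ^ 2) :
    HasSum (leverage v) (∑ k, rowGram v k k / rowGram v k k) :=
  hasSum_sum fun k _ => (hasSum_sq_rowGram_self hv k).div_const _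

lemma hasSum_mul_leverage (hv : ∀ k, Summable fun i => v k i ^ 2) {a : ℕ → ℝ} {M : ℝ}
    (ha : ∀ i, |a i| ≤ M) :
    HasSum (fun i => a i * leverage v i) (∑ k, (∑' i, a i * v k i ^ 2) / rowGram v k k) := by
  refine (hasSum_sum fun k _ =>
    ((hv k).mul_of_abs_le ha).hasSum.div_const (rowGram v k k)).congr_fun fun i => ?_
  simp only [leverage, mul_sum, mul_div_assoc]

lemma transpose_mul_self_diag_eq_zero_of_leverage_eq_zero
    (hv : ∀ k, Summable fun i => v k i ^ 2) {i : ℕ}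
    (hi : leverage v i = 0) : (vᵀ * v) i i = 0 := by
  have hterm := (sum_eq_zero_iff_of_nonneg fun k _ =>
    div_nonneg (sq_nonneg (v k i)) (rowGram_self_nonneg v k)).mp hi
  refine sum_eq_zero fun k _ => ?_
  change v k i * v k i = 0
  rw [← sq]
  rcases div_eq_zero_iff.mp (hterm k (mem_univ k)) with h | h
  · exact h
  · exact le_antisymm (h ▸ le_hasSum (hasSum_sq_rowGram_self hv k) i fun _ _ => sq_nonneg _)
      (sq_nonneg _)

lemma neg_tsum_mul_leverage_le (hv : ∀ k, Summable fun i => v k i ^ 2)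
    (horth : ∀ k l, k ≠ l → rowGram v k l = 0) {a : ℕ → ℝ} {M : ℝ} (ha : ∀ i, |a i| ≤ M) :
    -∑' i, a i ^ 2 * leverage v i ≤
      ∑' i, ∑' j, (vᵀ * v) i j ^ 2 - 2 * ∑' i, a i * (vᵀ * v) i i := by
  have ha2 : ∀ i, |a i ^ 2| ≤ M ^ 2 := fun i => by
    rw [abs_pow]; exact pow_le_pow_left₀ (abs_nonneg _) (ha i) 2
  rw [(hasSum_mul_leverage hv ha2).tsum_eq,
    tsum_congr fun i => (hasSum_transpose_mul_self_sq hv horth i).tsum_eq,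
    (hasSum_sum_sq_mul_rowGram_self hv).tsum_eq, (hasSum_mul_transpose_mul_self_diag hv ha).tsum_eq,
    mul_sum, ← sum_sub_distrib, ← sum_neg_distrib]
  refine sum_le_sum fun k _ => neg_div_le_sq_sub_two_mul (rowGram_self_nonneg v k) ?_
  have hav : Summable fun i => (a i * v k i) ^ 2 := by
    simpa only [mul_pow] using (hv k).mul_of_abs_le ha2
  calc (∑' i, a i * v k i ^ 2) ^ 2 = (∑' i, (a i * v k i) * v k i) ^ 2 := by
        congr 1; exact tsum_congr fun i => by ring
    _ ≤ (∑' i, (a i * v k i) ^ 2) * ∑' i, v k i ^ 2 := sq_tsum_mul_le hav (hv k)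
    _ = (∑' i, a i ^ 2 * v k i ^ 2) * rowGram v k k := by
        simp only [mul_pow, (hasSum_sq_rowGram_self hv k).tsum_eq]

lemma hasSum_tsum_transpose_mul_self_sub_ite_sq (hv : ∀ k, Summable fun i => v k i ^ 2)
    (horth : ∀ k l, k ≠ l → rowGram v k l = 0) {a : ℕ → ℝ} {M A : ℝ} (ha : ∀ i, |a i| ≤ M)
    (hA : HasSum (fun i => a i ^ 2) A) :
    HasSum (fun i => ∑' j, ((vᵀ * v) i j - if i = j then a i else 0) ^ 2)
      (∑' i, ∑' j, (vᵀ * v) i j ^ 2 - 2 * ∑' i, a i * (vᵀ * v) i i + A) := by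
  have hrow := hasSum_transpose_mul_self_sq hv horth
  have hR := hasSum_sum_sq_mul_rowGram_self hv
  have hT := hasSum_mul_transpose_mul_self_diag hv ha
  rw [tsum_congr fun i => (hrow i).tsum_eq, hR.tsum_eq, hT.tsum_eq]
  exact hasSum_tsum_sub_ite_sq hrow hR hT hA

end Orthogonal

/-- The loss `L(C)` of the statement, with weights `a = s ^ 2` and `B = Cᵀ * C`. -/
noncomputable def contrastiveLoss (a : ℕ → ℝ) (B : Matrix ℕ ℕ ℝ) : ℝ :=
  -(∑' i, a i * B i i) + 1 / 2 * ∑' i, ∑' j, B i j ^ 2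

lemma contrastiveLoss_ite_and (a : ℕ → ℝ) (d : ℕ) :
    contrastiveLoss a (fun i j => if i = j ∧ i < d then a i else 0) =
      -(1 / 2) * ∑ i ∈ range d, a i ^ 2 := by
  have hrange : ∀ f : ℕ → ℝ, ∑' i, (if i < d then f i else 0) = ∑ i ∈ range d, f i := fun f => by
    rw [tsum_eq_sum (s := range d) fun i hi => if_neg (by simpa using hi)]
    exact sum_congr rfl fun i hi => if_pos (mem_range.mp hi)
  have hrow : ∀ i, ∑' j, (if i = j ∧ i < d then a i else 0) ^ 2 =
      if i < d then a i ^ 2 else 0 := fun i => by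
    rw [tsum_eq_single i fun j hj => by simp [Ne.symm hj]]
    split_ifs <;> simp_all
  simp only [contrastiveLoss, hrow, true_and, mul_ite, mul_zero, hrange, ← sq]
  ring

section Contrastive

variable [Fintype ι] {v : Matrix ι ℕ ℝ} {a : ℕ → ℝ}

lemma sub_mul_tsum_leverage_tail_le (hv : ∀ k, Summable fun i => v k i ^ 2)
    (horth : ∀ k l, k ≠ l → rowGram v k l = 0) (ha : Antitone a) (ha0 : ∀ i, 0 ≤ a i) :
    (a (Fintype.card ι - 1) ^ 2 - a (Fintype.card ι) ^ 2) *
        ∑' i, leverage v (i + Fintype.card ι) ≤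
      2 * contrastiveLoss a (vᵀ * v) + ∑ i ∈ range (Fintype.card ι), a i ^ 2 := by
  have hsq : Antitone fun i => a i ^ 2 := fun i j hij => pow_le_pow_left₀ (ha0 j) (ha hij) 2
  have hcard : ∑' i, leverage v i ≤ Fintype.card ι := by
    rw [(hasSum_leverage hv).tsum_eq, ← nsmul_one, ← card_univ, ← sum_const]
    exact sum_le_sum fun k _ => div_self_le_one _
  have hbath := sub_mul_tsum_tail_le_sum_range_sub_tsum_mul _ hsq (fun i => sq_nonneg (a i))
    (leverage_nonneg v) (leverage_le_one hv horth) (hasSum_leverage hv).summable hcard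
  have hkey := neg_tsum_mul_leverage_le hv horth (ha.abs_le_apply_zero ha0)
  rw [contrastiveLoss]
  linarith

lemma transpose_mul_self_diag_eq_zero_of_contrastiveLoss_eq
    (hv : ∀ k, Summable fun i => v k i ^ 2) (horth : ∀ k l, k ≠ l → rowGram v k l = 0)
    (ha : Antitone a) (ha0 : ∀ i, 0 ≤ a i)
    (hgap : a (Fintype.card ι) < a (Fintype.card ι - 1))
    (hmin : contrastiveLoss a (vᵀ * v) = -(1 / 2) * ∑ i ∈ range (Fintype.card ι), a i ^ 2)
    {i : ℕ} (hi : Fintype.card ι ≤ i) : (vᵀ * v) i i = 0 := by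
  set d := Fintype.card ι
  have hgap2 : 0 < a (d - 1) ^ 2 - a d ^ 2 :=
    sub_pos.mpr (pow_lt_pow_left₀ hgap (ha0 d) two_ne_zero)
  have htail : ∑' i, leverage v (i + d) ≤ 0 := by
    have := sub_mul_tsum_leverage_tail_le hv horth ha ha0
    rw [hmin] at this
    nlinarith
  have hsum : HasSum (fun i => leverage v (i + d)) 0 :=
    le_antisymm htail (tsum_nonneg fun _ => leverage_nonneg v _) ▸
      ((summable_nat_add_iff d).mpr (hasSum_leverage hv).summable).hasSum
  rw [hasSum_zero_iff_of_nonneg fun _ => leverage_nonneg v _] at hsum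
  apply transpose_mul_self_diag_eq_zero_of_leverage_eq_zero hv
  simpa [Nat.sub_add_cancel hi] using congrFun hsum (i - d)

lemma transpose_mul_self_eq_of_contrastiveLoss_eq (hv : ∀ k, Summable fun i => v k i ^ 2)
    (horth : ∀ k l, k ≠ l → rowGram v k l = 0) {M : ℝ} (ha : ∀ i, |a i| ≤ M) (d : ℕ)
    (hdiag : ∀ i, d ≤ i → (vᵀ * v) i i = 0)
    (hmin : contrastiveLoss a (vᵀ * v) = -(1 / 2) * ∑ i ∈ range d, a i ^ 2) :
    vᵀ * v = fun i j => if i = j ∧ i < d then a i else 0 := by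
  set b : ℕ → ℝ := fun i => if i < d then a i else 0
  have hb : ∀ i, |b i| ≤ M := fun i => by
    by_cases h : i < d
    · simpa [b, h] using ha i
    · simpa [b, h] using (abs_nonneg _).trans (ha i)
  have hb2 : HasSum (fun i => b i ^ 2) (∑ i ∈ range d, a i ^ 2) := by
    have : HasSum (fun i => b i ^ 2) (∑ i ∈ range d, b i ^ 2) := hasSum_sum_of_ne_finset_zero
      fun i hi => by simp [b, not_lt.mp (by simpa using hi)]
    rwa [sum_congr rfl fun i hi => show b i ^ 2 = a i ^ 2 by simp [b, mem_range.mp hi]] at this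
  have htrace : ∑' i, b i * (vᵀ * v) i i = ∑' i, a i * (vᵀ * v) i i := tsum_congr fun i => by
    by_cases h : i < d
    · simp [b, h]
    · simp [b, h, hdiag i (not_lt.mp h)]
  have H := hasSum_tsum_transpose_mul_self_sub_ite_sq hv horth hb hb2
  have hvalue : ∑' i, ∑' j, (vᵀ * v) i j ^ 2 - 2 * ∑' i, a i * (vᵀ * v) i i
      + ∑ i ∈ range d, a i ^ 2 = 0 := by
    rw [contrastiveLoss] at hmin; linarith
  rw [htrace, hvalue] at H
  have hE := eq_zero_of_hasSum_tsum_sq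
    (fun i => ((hasSum_transpose_mul_self_sq hv horth i).sub_ite_sq i (b i)).summable) H
  ext i j
  have := congrFun (congrFun hE i) j
  simp only [Pi.zero_apply, sub_eq_zero] at this
  rw [this, ite_and]

end Contrastive

section Rows

variable [Fintype ι] {C : Matrix ι ℕ ℝ} {a : ℕ → ℝ}

theorem contrastiveLoss_eq (hC : ∀ k, Summable fun i => C k i ^ 2) {M : ℝ}
    (ha : ∀ i, |a i| ≤ M) (ha2 : Summable fun i => a i ^ 2) :
    contrastiveLoss a (Cᵀ * C) =
      1 / 2 * ∑' i, ∑' j, ((Cᵀ * C) i j - if i = j then a i else 0) ^ 2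
        - 1 / 2 * ∑' i, a i ^ 2 := by
  classical
  obtain ⟨v, hv, horth, hvC⟩ := exists_orthogonal_transpose_mul_self_eq hC
  rw [← hvC, (hasSum_tsum_transpose_mul_self_sub_ite_sq hv horth ha ha2.hasSum).tsum_eq,
    contrastiveLoss]
  ring

theorem neg_half_sum_range_le_contrastiveLoss (hC : ∀ k, Summable fun i => C k i ^ 2)
    (ha : Antitone a) (ha0 : ∀ i, 0 ≤ a i) :
    -(1 / 2) * ∑ i ∈ range (Fintype.card ι), a i ^ 2 ≤ contrastiveLoss a (Cᵀ * C) := by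
  classical
  obtain ⟨v, hv, horth, hvC⟩ := exists_orthogonal_transpose_mul_self_eq hC
  have := sub_mul_tsum_leverage_tail_le hv horth ha ha0
  have hgap : 0 ≤ a (Fintype.card ι - 1) ^ 2 - a (Fintype.card ι) ^ 2 :=
    sub_nonneg.mpr (pow_le_pow_left₀ (ha0 _) (ha (Nat.sub_le _ 1)) 2)
  have htail : 0 ≤ ∑' i, leverage v (i + Fintype.card ι) := tsum_nonneg fun _ => leverage_nonneg v _
  rw [← hvC]
  nlinarith [mul_nonneg hgap htail]

theorem contrastiveLoss_eq_iff (hC : ∀ k, Summable fun i => C k i ^ 2)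
    (ha : Antitone a) (ha0 : ∀ i, 0 ≤ a i)
    (hgap : a (Fintype.card ι) < a (Fintype.card ι - 1)) :
    contrastiveLoss a (Cᵀ * C) = -(1 / 2) * ∑ i ∈ range (Fintype.card ι), a i ^ 2 ↔
      Cᵀ * C = fun i j => if i = j ∧ i < Fintype.card ι then a i else 0 := by
  classical
  obtain ⟨v, hv, horth, hvC⟩ := exists_orthogonal_transpose_mul_self_eq hC
  rw [← hvC]
  refine ⟨fun hmin => ?_, fun h => h ▸ contrastiveLoss_ite_and a _⟩
  exact transpose_mul_self_eq_of_contrastiveLoss_eq hv horth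
    (ha.abs_le_apply_zero ha0) _
    (fun i hi => transpose_mul_self_diag_eq_zero_of_contrastiveLoss_eq hv horth ha ha0 hgap hmin hi)
    hmin

end Rows

theorem stmt16_general (d : ℕ)
    (s : ℕ → ℝ) (hmono : Antitone s) (hs : ∀ i, 0 ≤ s i)
    (hs2 : Summable fun i => (s i) ^ 2)
    (hgap : s d < s (d - 1)) :
    let B : (Fin d → ℕ → ℝ) → ℕ → ℕ → ℝ := fun C i j => ∑ k, C k i * C k j
    let L : (Fin d → ℕ → ℝ) → ℝ := fun C =>
      -(∑' i, (s i) ^ 2 * B C i i) + (1 / 2) * ∑' i, ∑' j, (B C i j) ^ 2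
    let D : ℕ → ℕ → ℝ := fun i j => if i = j then (s i) ^ 2 else 0
    let Bd : ℕ → ℕ → ℝ := fun i j => if i = j ∧ i < d then (s i) ^ 2 else 0
    (∀ C : Fin d → ℕ → ℝ, (∀ k, Summable fun i => (C k i) ^ 2) →
        L C = (1 / 2) * (∑' i, ∑' j, (B C i j - D i j) ^ 2)
          - (1 / 2) * ∑' i, ((s i) ^ 2) ^ 2) ∧
    (∀ C : Fin d → ℕ → ℝ, (∀ k, Summable fun i => (C k i) ^ 2) →
        -(1 / 2) * ∑ i ∈ Finset.range d, ((s i) ^ 2) ^ 2 ≤ L C) ∧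
    (∀ C : Fin d → ℕ → ℝ, (∀ k, Summable fun i => (C k i) ^ 2) →
        (L C = -(1 / 2) * ∑ i ∈ Finset.range d, ((s i) ^ 2) ^ 2 ↔ B C = Bd)) := by
  intro B L D Bd
  have ha : Antitone fun i => s i ^ 2 := fun i j hij => pow_le_pow_left₀ (hs j) (hmono hij) 2
  have ha0 : ∀ i, 0 ≤ s i ^ 2 := fun i => sq_nonneg (s i)
  have habs := ha.abs_le_apply_zero ha0
  have ha2 : Summable fun i => (s i ^ 2) ^ 2 := (hs2.mul_of_abs_le habs).congr fun i => (sq _).symm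
  have hgap2 : s (Fintype.card (Fin d)) ^ 2 < s (Fintype.card (Fin d) - 1) ^ 2 := by
    simpa using pow_lt_pow_left₀ hgap (hs d) two_ne_zero
  refine ⟨fun C hC => contrastiveLoss_eq hC habs ha2, fun C hC => ?_, fun C hC => ?_⟩
  · have := neg_half_sum_range_le_contrastiveLoss hC ha ha0
    rwa [Fintype.card_fin] at this
  · have := contrastiveLoss_eq_iff hC ha ha0 hgap2
    rwa [Fintype.card_fin] at this

/-- Minimizer of the spectral contrastive loss (matrix form).
Here `s i` denotes the paper's `s_{i+1}` (0-indexed nonincreasing ℓ² sequence).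
For `C` with `d` rows and ℓ² rows, `B = CᵀC`, the loss
`L(C) = -∑ s_i² B_ii + ½ ∑_{ij} B_ij²` equals `½‖B - D‖_F² - ½‖D‖_F²` with
`D = diag(s_i²)`, and it is minimized over `B = CᵀC` (rank ≤ d, PSD) exactly
when `B = diag(s_1²,…,s_d²,0,…)` (assuming `s_d > s_{d+1}`). -/
theorem stmt16 (d : ℕ) (hd : 0 < d)
    (s : ℕ → ℝ) (hmono : Antitone s) (hs : ∀ i, 0 ≤ s i)
    (hs2 : Summable fun i => (s i) ^ 2)
    (hgap : s d < s (d - 1)) :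
    let B : (Fin d → ℕ → ℝ) → ℕ → ℕ → ℝ := fun C i j => ∑ k, C k i * C k j
    let L : (Fin d → ℕ → ℝ) → ℝ := fun C =>
      -(∑' i, (s i) ^ 2 * B C i i) + (1 / 2) * ∑' i, ∑' j, (B C i j) ^ 2
    let D : ℕ → ℕ → ℝ := fun i j => if i = j then (s i) ^ 2 else 0
    let Bd : ℕ → ℕ → ℝ := fun i j => if i = j ∧ i < d then (s i) ^ 2 else 0
    (∀ C : Fin d → ℕ → ℝ, (∀ k, Summable fun i => (C k i) ^ 2) →
        L C = (1 / 2) * (∑' i, ∑' j, (B C i j - D i j) ^ 2)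
          - (1 / 2) * ∑' i, ((s i) ^ 2) ^ 2) ∧
    (∀ C : Fin d → ℕ → ℝ, (∀ k, Summable fun i => (C k i) ^ 2) →
        -(1 / 2) * ∑ i ∈ Finset.range d, ((s i) ^ 2) ^ 2 ≤ L C) ∧
    (∀ C : Fin d → ℕ → ℝ, (∀ k, Summable fun i => (C k i) ^ 2) →
        (L C = -(1 / 2) * ∑ i ∈ Finset.range d, ((s i) ^ 2) ^ 2 ↔ B C = Bd)) :=
  stmt16_general d s hmono hs hs2 hgap
end

section
/- Minimizer of the non-contrastive loss under orthonormality: Let $(s_i)_{i \ge 1}$ be a nonincreasing nonnegative sequence in $\ell^2$ and let $B = C^\top C$ where $C \in \mathbb{R}^{d \times \infty}$ has orthonormal rows (so $\sum_i B_{ii} = d$ and each $B_{ii} \le 1$). Then $-\sum_i s_i^2 B_{ii} \ge -\sum_{i=1}^d s_i^2$, with equality (when $s_d > s_{d+1}$) if and only if $B_{ii} = 1$ for $i \le d$ and $B_{ii} = 0$ for $i > d$, i.e., the row space of $C$ equals the span of the first $d$ coordinate directions. -/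
set_option maxHeartbeats 1600000


/-- Minimizer of the non-contrastive loss under orthonormality.
Here `s i` denotes the paper's `s_{i+1}` (0-indexed nonincreasing ℓ² sequence),
`C` has orthonormal rows in ℓ², and `B i = (CᵀC)_{ii} = ∑_k C_{ki}²`. Then
`-∑ s_i² B_i ≥ -∑_{i<d} s_i²`, with equality (when `s_d > s_{d+1}`) iff
`B_i = 1` for `i < d` and `B_i = 0` for `i ≥ d`. -/
theorem stmt17 (d : ℕ) (hd : 0 < d)
    (s : ℕ → ℝ) (hmono : Antitone s) (hs : ∀ i, 0 ≤ s i)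
    (hs2 : Summable fun i => (s i) ^ 2)
    (hgap : s d < s (d - 1))
    (C : Fin d → ℕ → ℝ)
    (hC2 : ∀ k, Summable fun i => (C k i) ^ 2)
    (horth : ∀ k l, ∑' i, C k i * C l i = if k = l then (1 : ℝ) else 0) :
    (-(∑ i ∈ Finset.range d, (s i) ^ 2) ≤ -(∑' i, (s i) ^ 2 * ∑ k, (C k i) ^ 2)) ∧
      ((-(∑' i, (s i) ^ 2 * ∑ k, (C k i) ^ 2) = -(∑ i ∈ Finset.range d, (s i) ^ 2)) ↔
        ∀ i, (i < d → (∑ k, (C k i) ^ 2) = 1) ∧ (d ≤ i → (∑ k, (C k i) ^ 2) = 0)) := by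
  set B : ℕ → ℝ := fun i => ∑ k, (C k i) ^ 2 with hBdef
  have hB0 : ∀ i, 0 ≤ B i := fun i => Finset.sum_nonneg fun k _ => sq_nonneg _
  -- summability of cross products
  have hmul : ∀ k l : Fin d, Summable fun j => C k j * C l j := by
    intro k l
    apply Summable.of_abs
    refine Summable.of_nonneg_of_le (fun j => abs_nonneg _) (fun j => ?_)
      ((hC2 k).add (hC2 l))
    rw [abs_le]
    constructor <;> nlinarith [sq_nonneg (C k j - C l j), sq_nonneg (C k j + C l j)]
  have hBsum : Summable B :=
    summable_sum (fun k (_ : k ∈ Finset.univ) => (hC2 k))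
  have hBtot : ∑' i, B i = (d : ℝ) := by
    calc ∑' i, B i = ∑ k, ∑' i, (C k i) ^ 2 := Summable.tsum_finsetSum (fun k _ => hC2 k)
      _ = ∑ _k : Fin d, (1 : ℝ) := by
          refine Finset.sum_congr rfl fun k _ => ?_
          simpa [pow_two] using horth k k
      _ = (d : ℝ) := by simp
  -- Bessel: each B i ≤ 1
  have hBle1 : ∀ i, B i ≤ 1 := by
    intro i
    set a : Fin d → ℝ := fun k => C k i with ha
    have hsum_g : ∀ k l : Fin d, Summable fun j => (a k * a l) * (C k j * C l j) :=
      fun k l => (hmul k l).mul_left _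
    have hfg : ∀ j, (∑ k, a k * C k j) ^ 2 = ∑ k, ∑ l, (a k * a l) * (C k j * C l j) := by
      intro j
      rw [sq, Finset.sum_mul_sum]
      exact Finset.sum_congr rfl fun k _ => Finset.sum_congr rfl fun l _ => by ring
    have hg : Summable fun j => (∑ k, a k * C k j) ^ 2 := by
      rw [show (fun j => (∑ k, a k * C k j) ^ 2)
          = fun j => ∑ k, ∑ l, (a k * a l) * (C k j * C l j) from funext hfg]
      exact summable_sum fun k _ => summable_sum fun l _ => hsum_g k l
    have htsum : ∑' j, (∑ k, a k * C k j) ^ 2 = B i := by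
      calc ∑' j, (∑ k, a k * C k j) ^ 2
          = ∑' j, ∑ k, ∑ l, (a k * a l) * (C k j * C l j) := tsum_congr hfg
        _ = ∑ k, ∑ l, (a k * a l) * ∑' j, (C k j * C l j) := by
            rw [Summable.tsum_finsetSum (fun k _ => summable_sum fun l _ => hsum_g k l)]
            refine Finset.sum_congr rfl fun k _ => ?_
            rw [Summable.tsum_finsetSum (fun l _ => hsum_g k l)]
            exact Finset.sum_congr rfl fun l _ => tsum_mul_left
        _ = ∑ k, a k ^ 2 := by
            refine Finset.sum_congr rfl fun k _ => ?_
            simp [horth, mul_ite, Finset.sum_ite_eq, sq]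
        _ = B i := by simp [hBdef, ha]
    have hfi : ∑ k, a k * C k i = B i := by
      simp [hBdef, ha, pow_two]
    have hle : B i ^ 2 ≤ B i := by
      have h1 : (∑ k, a k * C k i) ^ 2 ≤ ∑' j, (∑ k, a k * C k j) ^ 2 :=
        Summable.le_tsum hg i fun j _ => sq_nonneg _
      rwa [hfi, htsum] at h1
    nlinarith [hB0 i]
  -- summability of the objective
  have hsB : Summable fun i => s i ^ 2 * B i := by
    refine Summable.of_nonneg_of_le (fun i => mul_nonneg (sq_nonneg _) (hB0 i))
      (fun i => ?_) hs2
    exact mul_le_of_le_one_right (sq_nonneg _) (hBle1 i)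
  have hBtail : Summable fun i => B (i + d) := (summable_nat_add_iff d).2 hBsum
  have hsBtail : Summable fun i => s (i + d) ^ 2 * B (i + d) := (summable_nat_add_iff d).2 hsB
  set t : ℝ := s (d - 1) ^ 2 with htdef
  -- monotonicity facts
  have hts : ∀ i < d, t ≤ s i ^ 2 := by
    intro i hi
    exact pow_le_pow_left₀ (hs _) (hmono (Nat.le_sub_one_of_lt hi)) 2
  have hst : ∀ i, d ≤ i → s i ^ 2 < t := by
    intro i hi
    have h1 : s i ≤ s d := hmono hi
    exact pow_lt_pow_left₀ (lt_of_le_of_lt h1 hgap) (hs i) (by norm_num)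
  have hsplit : ∑ i ∈ Finset.range d, s i ^ 2 * B i + ∑' i, s (i + d) ^ 2 * B (i + d)
      = ∑' i, s i ^ 2 * B i := Summable.sum_add_tsum_nat_add d hsB
  have hBsplit : ∑ i ∈ Finset.range d, B i + ∑' i, B (i + d) = (d : ℝ) := by
    rw [Summable.sum_add_tsum_nat_add d hBsum, hBtot]
  -- tail bound
  have htail : ∑' i, s (i + d) ^ 2 * B (i + d) ≤ ∑' i, t * B (i + d) := by
    refine Summable.tsum_le_tsum (fun i => ?_) hsBtail (hBtail.mul_left t)
    exact mul_le_mul_of_nonneg_right (le_of_lt (hst _ (Nat.le_add_left d i))) (hB0 _)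
  have htailval : ∑' i, t * B (i + d) = t * ((d : ℝ) - ∑ i ∈ Finset.range d, B i) := by
    rw [tsum_mul_left]
    congr 1
    linarith [hBsplit]
  -- head bound
  have hhead : ∑ i ∈ Finset.range d, s i ^ 2 * B i
      + t * ((d : ℝ) - ∑ i ∈ Finset.range d, B i) ≤ ∑ i ∈ Finset.range d, s i ^ 2 := by
    have hd' : (d : ℝ) = ∑ _i ∈ Finset.range d, (1 : ℝ) := by simp
    rw [hd', ← Finset.sum_sub_distrib, Finset.mul_sum, ← Finset.sum_add_distrib]
    refine Finset.sum_le_sum fun i hi => ?_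
    have h1 := hts i (Finset.mem_range.mp hi)
    have h2 := hBle1 i
    have h3 := hB0 i
    nlinarith [sq_nonneg (s i)]
  have key : ∑' i, s i ^ 2 * B i ≤ ∑ i ∈ Finset.range d, s i ^ 2 := by
    rw [← hsplit]
    calc ∑ i ∈ Finset.range d, s i ^ 2 * B i + ∑' i, s (i + d) ^ 2 * B (i + d)
        ≤ ∑ i ∈ Finset.range d, s i ^ 2 * B i + ∑' i, t * B (i + d) := by linarith
      _ = ∑ i ∈ Finset.range d, s i ^ 2 * B i
          + t * ((d : ℝ) - ∑ i ∈ Finset.range d, B i) := by rw [htailval]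
      _ ≤ ∑ i ∈ Finset.range d, s i ^ 2 := hhead
  refine ⟨by linarith, ?_, ?_⟩
  · -- equality → B structure
    intro heq
    have heq' : ∑' i, s i ^ 2 * B i = ∑ i ∈ Finset.range d, s i ^ 2 := by linarith
    have hTU : ∑' i, s (i + d) ^ 2 * B (i + d) = ∑' i, t * B (i + d) := by
      apply le_antisymm htail
      rw [htailval]
      have := hsplit
      linarith [hhead, heq']
    have hpt : ∀ n, s (n + d) ^ 2 * B (n + d) = t * B (n + d) := by
      intro n
      by_contra hne
      have hlt : s (n + d) ^ 2 * B (n + d) < t * B (n + d) := by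
        rcases lt_or_eq_of_le (mul_le_mul_of_nonneg_right
          (le_of_lt (hst _ (Nat.le_add_left d n))) (hB0 (n + d))) with h | h
        · exact h
        · exact absurd h hne
      have := Summable.tsum_lt_tsum_of_nonneg
        (fun m => mul_nonneg (sq_nonneg (s (m + d))) (hB0 (m + d)))
        (fun m => mul_le_mul_of_nonneg_right
          (le_of_lt (hst (m + d) (Nat.le_add_left d m))) (hB0 (m + d)))
        hlt (hBtail.mul_left t)
      linarith [hTU]
    have hBtail0 : ∀ i, d ≤ i → B i = 0 := by
      intro i hi
      have h := hpt (i - d)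
      rw [Nat.sub_add_cancel hi] at h
      have hlt := hst i hi
      by_contra hne
      have hpos : 0 < B i := lt_of_le_of_ne (hB0 i) (Ne.symm hne)
      nlinarith
    have hsum_d : ∑ i ∈ Finset.range d, B i = (d : ℝ) := by
      have h0 : ∑' i, B (i + d) = 0 := by
        rw [show (fun i => B (i + d)) = fun _ => (0 : ℝ) from
          funext fun i => hBtail0 _ (Nat.le_add_left d i)]
        exact tsum_zero
      linarith [hBsplit]
    have hB1 : ∀ i, i < d → B i = 1 := by
      have hz : ∑ i ∈ Finset.range d, (1 - B i) = 0 := by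
        rw [Finset.sum_sub_distrib, hsum_d]; simp
      intro i hi
      have := (Finset.sum_eq_zero_iff_of_nonneg
        (fun j _ => by linarith [hBle1 j])).mp hz i (Finset.mem_range.mpr hi)
      linarith
    exact fun i => ⟨hB1 i, hBtail0 i⟩
  · -- B structure → equality
    intro h
    have h' : ∀ i, (i < d → B i = 1) ∧ (d ≤ i → B i = 0) := h
    have : ∑' i, s i ^ 2 * B i = ∑ i ∈ Finset.range d, s i ^ 2 := by
      rw [tsum_eq_sum (s := Finset.range d)
        (fun i hi => by
          rw [(h' i).2 (le_of_not_gt (fun hlt => hi (Finset.mem_range.mpr hlt))), mul_zero])]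
      exact Finset.sum_congr rfl fun i hi => by
        rw [(h' i).1 (Finset.mem_range.mp hi), mul_one]
    rw [this]
end
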